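/- For all real parameters a > 0, b > 1, T > 0, every even integer n ≥ 2, and every ε ∈ (0, 1], the interval [s_{n−1}(b,T) + T·b^{n−1}·arcsin(ε), s_n(b,T) − T·b^{n−1}·arcsin(ε)] is nonempty, and for every χ in this interval one has G_{a,b,T}(χ) ≤ −ε·a·T·b^{n−1}. -/

import Mathlib

open Real Filter Set

/-- Breakpoints `s_n(b,T) = T·π·(b^n − 1)/(b − 1)`. -/
noncomputable def brk (b T : ℝ) (n : ℕ) : ℝ := T * Real.pi * (b ^ n - 1) / (b - 1)

/-- Index of the segment containing `x ≥ 0`: the unique `m` with `s_m ≤ x < s_{m+1}`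
(for `b > 1`, `T > 0`). -/
noncomputable def seg (b T x : ℝ) : ℕ := sInf {n : ℕ | x < brk b T (n + 1)}

/-- The saturated Nussbaum function `N_{a,b,T}`: on `[s_{n−1}, s_n)` (with `m = n − 1`)
it equals `(−1)^m·a·cos((χ − s_m)/(b^m·T))`, extended evenly to `χ < 0`. -/
noncomputable def satN (a b T : ℝ) (χ : ℝ) : ℝ :=
  (-1 : ℝ) ^ (seg b T |χ|) * a *
    Real.cos ((|χ| - brk b T (seg b T |χ|)) / (b ^ (seg b T |χ|) * T))

/-- The integrated function `G_{a,b,T}(χ) = ∫_0^χ N_{a,b,T}(τ) dτ`. -/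
noncomputable def satG (a b T : ℝ) (χ : ℝ) : ℝ := ∫ τ in (0:ℝ)..χ, satN a b T τ

/-! On the segment `[s_m, s_{m+1}]` the function `N` is the cosine piece
`(-1)^m a cos((χ - s_m)/(b^m T))`, whose argument runs over `[0, π]`; so its integral over a full
segment vanishes, `G` vanishes at every breakpoint, and on the segment
`G(χ) = (-1)^m a b^m T sin((χ - s_m)/(b^m T))`. For even `n` the segment `[s_{n-1}, s_n]` has odd
`m = n - 1`, and the shrunk interval is exactly where that sine is at least `ε`. -/

open MeasureTheory

lemma Real.le_sin_of_arcsin_le_of_le_pi_sub_arcsin {ε θ : ℝ} (hε : ε ≤ 1)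
    (h₁ : arcsin ε ≤ θ) (h₂ : θ ≤ π - arcsin ε) : ε ≤ sin θ := by
  wlog hθ : θ ≤ π / 2 generalizing θ
  · simpa using this (θ := π - θ) (by linarith) (by linarith) (by linarith)
  rcases hθ.lt_or_eq with hθ | rfl
  · exact (arcsin_le_iff_le_sin' ⟨(neg_pi_div_two_le_arcsin ε).trans h₁, hθ⟩).1 h₁
  · simpa using hε

section Segments

variable {a b T : ℝ}

lemma brk_zero : brk b T 0 = 0 := by simp [brk]

lemma brk_succ (hb : b ≠ 1) (m : ℕ) : brk b T (m + 1) = brk b T m + T * π * b ^ m := by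
  have : b - 1 ≠ 0 := sub_ne_zero.2 hb
  unfold brk
  field_simp
  ring

lemma brk_strictMono (hb : 1 < b) (hT : 0 < T) : StrictMono (brk b T) :=
  strictMono_nat_of_lt_succ fun m => by
    rw [brk_succ hb.ne']
    have : 0 < T * π * b ^ m := by positivity
    linarith

lemma seg_eq_of_mem_Ico (hb : 1 < b) (hT : 0 < T) {m : ℕ} {x : ℝ}
    (hx : x ∈ Ico (brk b T m) (brk b T (m + 1))) : seg b T x = m := by
  refine le_antisymm (Nat.sInf_le hx.2) (le_csInf ⟨m, hx.2⟩ fun k hk => ?_)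
  by_contra! hkm
  exact (hk.trans_le ((brk_strictMono hb hT).monotone hkm)).not_ge hx.1

lemma satN_eq_of_mem_Ico (hb : 1 < b) (hT : 0 < T) {m : ℕ} {x : ℝ}
    (hx : x ∈ Ico (brk b T m) (brk b T (m + 1))) :
    satN a b T x = (-1) ^ m * a * cos ((x - brk b T m) / (b ^ m * T)) := by
  have hx0 : 0 ≤ x := by
    simpa [brk_zero] using ((brk_strictMono hb hT).monotone m.zero_le).trans hx.1
  rw [satN, abs_of_nonneg hx0, seg_eq_of_mem_Ico hb hT hx]

-- `satN` agrees with the cosine piece on the segment except at its right endpoint.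
lemma intervalIntegrable_satN_segment (hb : 1 < b) (hT : 0 < T) (m : ℕ) {χ : ℝ}
    (hχ : χ ∈ Icc (brk b T m) (brk b T (m + 1))) :
    IntervalIntegrable (satN a b T) volume (brk b T m) χ := by
  refine (Continuous.intervalIntegrable (by fun_prop :
    Continuous fun τ => (-1) ^ m * a * cos ((τ - brk b T m) / (b ^ m * T))) _ _).congr_uIoo ?_
  rw [uIoo_of_le hχ.1]
  exact fun τ hτ => (satN_eq_of_mem_Ico hb hT ⟨hτ.1.le, hτ.2.trans_le hχ.2⟩).symm

lemma integral_satN_segment (hb : 1 < b) (hT : 0 < T) (m : ℕ) {χ : ℝ}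
    (hχ : χ ∈ Icc (brk b T m) (brk b T (m + 1))) :
    ∫ τ in brk b T m..χ, satN a b T τ =
      (-1) ^ m * a * (b ^ m * T) * sin ((χ - brk b T m) / (b ^ m * T)) := by
  set s := brk b T m
  set c := b ^ m * T
  have hc : c ≠ 0 := by positivity
  have hderiv (τ : ℝ) : HasDerivAt (fun τ => (-1) ^ m * a * c * sin ((τ - s) / c))
      ((-1) ^ m * a * cos ((τ - s) / c)) τ :=
    ((((hasDerivAt_id' τ).sub_const s).div_const c).sin.const_mul _).congr_deriv (by field_simp)
  rw [intervalIntegral.integral_congr_Ioo_of_le hχ.1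
      fun τ hτ => satN_eq_of_mem_Ico hb hT ⟨hτ.1.le, hτ.2.trans_le hχ.2⟩,
    intervalIntegral.integral_eq_sub_of_hasDerivAt (fun τ _ => hderiv τ)
      (Continuous.intervalIntegrable (by fun_prop) _ _)]
  simp

lemma intervalIntegrable_satN_zero_brk (hb : 1 < b) (hT : 0 < T) (m : ℕ) :
    IntervalIntegrable (satN a b T) volume 0 (brk b T m) := by
  induction m with
  | zero => simp [brk_zero]
  | succ m ih =>
    exact ih.trans (intervalIntegrable_satN_segment hb hT m
      (right_mem_Icc.2 ((brk_strictMono hb hT).monotone m.le_succ)))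

lemma satG_eq_satG_brk_add (hb : 1 < b) (hT : 0 < T) (m : ℕ) {χ : ℝ}
    (hχ : χ ∈ Icc (brk b T m) (brk b T (m + 1))) :
    satG a b T χ = satG a b T (brk b T m) + ∫ τ in brk b T m..χ, satN a b T τ :=
  (intervalIntegral.integral_add_adjacent_intervals (intervalIntegrable_satN_zero_brk hb hT m)
    (intervalIntegrable_satN_segment hb hT m hχ)).symm

lemma satG_brk (hb : 1 < b) (hT : 0 < T) (m : ℕ) : satG a b T (brk b T m) = 0 := by
  induction m with
  | zero => simp [satG, brk_zero]
  | succ m ih =>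
    have hχ := right_mem_Icc.2 ((brk_strictMono hb hT).monotone m.le_succ)
    have hπ : (brk b T (m + 1) - brk b T m) / (b ^ m * T) = π := by
      rw [brk_succ hb.ne']
      field_simp
      ring
    rw [satG_eq_satG_brk_add hb hT m hχ, ih, integral_satN_segment hb hT m hχ, hπ, sin_pi]
    ring

lemma satG_of_mem_Icc (hb : 1 < b) (hT : 0 < T) (m : ℕ) {χ : ℝ}
    (hχ : χ ∈ Icc (brk b T m) (brk b T (m + 1))) :
    satG a b T χ = (-1) ^ m * a * (b ^ m * T) * sin ((χ - brk b T m) / (b ^ m * T)) := by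
  rw [satG_eq_satG_brk_add hb hT m hχ, satG_brk hb hT, zero_add,
    integral_satN_segment hb hT m hχ]

end Segments

/-- on even segments, away from the endpoints by `T·b^{n−1}·arcsin ε`,
`G` stays below `−ε·a·T·b^{n−1}`. -/
theorem satG_neg_interval (a b T : ℝ) (ha : 0 < a) (hb : 1 < b) (hT : 0 < T)
    (n : ℕ) (hn : 2 ≤ n) (hne : Even n) (ε : ℝ) (hε : ε ∈ Set.Ioc (0 : ℝ) 1) :
    brk b T (n - 1) + T * b ^ (n - 1) * Real.arcsin ε ≤
      brk b T n - T * b ^ (n - 1) * Real.arcsin ε ∧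
    ∀ χ ∈ Set.Icc (brk b T (n - 1) + T * b ^ (n - 1) * Real.arcsin ε)
        (brk b T n - T * b ^ (n - 1) * Real.arcsin ε),
      satG a b T χ ≤ -(ε * a * T * b ^ (n - 1)) := by
  obtain ⟨m, rfl⟩ : ∃ m, n = m + 1 := ⟨n - 1, by omega⟩
  have hm : Odd m := by simpa [Nat.even_add_one] using hne
  rw [Nat.add_sub_cancel, brk_succ hb.ne']
  have hc : 0 < b ^ m * T := by positivity
  have hα₀ : 0 ≤ T * b ^ m * arcsin ε := by have := arcsin_nonneg.2 hε.1.le; positivity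
  have hα₁ : T * b ^ m * arcsin ε ≤ T * b ^ m * (π / 2) :=
    mul_le_mul_of_nonneg_left (arcsin_le_pi_div_two ε) (by positivity)
  refine ⟨by linarith, fun χ hχ => ?_⟩
  have hθ₁ : arcsin ε ≤ (χ - brk b T m) / (b ^ m * T) := by
    rw [le_div_iff₀ hc]; linarith [hχ.1]
  have hθ₂ : (χ - brk b T m) / (b ^ m * T) ≤ π - arcsin ε := by
    rw [div_le_iff₀ hc]; linarith [hχ.2]
  have hsin := le_sin_of_arcsin_le_of_le_pi_sub_arcsin hε.2 hθ₁ hθ₂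
  rw [satG_of_mem_Icc hb hT m ⟨by linarith [hχ.1], by rw [brk_succ hb.ne']; linarith [hχ.2]⟩,
    hm.neg_one_pow]
  linarith [mul_le_mul_of_nonneg_left hsin (mul_pos ha hc).le]
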